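/- Let p ≥ 5 and n ≥ 1 be real numbers (with p ≥ 5). Then the finite sum ∑_{k=0}^{⌊2n/p⌋ - 1} (1 - (((p-1)/2)² + k·p·(p-1) + k²·p²)/(2n²)) is at least 2n/(3p) - 1 + 1/p, provided ⌊2n/p⌋ ≥ 1. -/
import Mathlib

lemma aux_cube (m : ℕ) : ∑ k ∈ Finset.range m, ((k : ℝ) + 1/2) ^ 2 ≤ (m : ℝ) ^ 3 / 3 := by
  induction m with
  | zero => simp
  | succ m ih =>
    rw [Finset.sum_range_succ]
    push_cast
    nlinarith [sq_nonneg ((m : ℝ))]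

theorem sum_estimate (p n : ℝ) (hp : 5 ≤ p) (hn : 1 ≤ n)
    (hfloor : 1 ≤ ⌊2 * n / p⌋) :
    ∑ k ∈ Finset.range (⌊2 * n / p⌋).toNat,
        (1 - (((p - 1) / 2) ^ 2 + (k : ℝ) * p * (p - 1) + (k : ℝ) ^ 2 * p ^ 2) / (2 * n ^ 2))
      ≥ 2 * n / (3 * p) - 1 + 1 / p := by
  have hp0 : (0:ℝ) < p := by linarith
  have hn0 : (0:ℝ) < n := by linarith
  set m := (⌊2 * n / p⌋).toNat with hmdef
  have hm1 : 1 ≤ m := by omega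
  have hcast : ((m : ℝ)) = ((⌊2 * n / p⌋ : ℤ) : ℝ) := by
    have h : (⌊2 * n / p⌋.toNat : ℤ) = ⌊2 * n / p⌋ := Int.toNat_of_nonneg (by linarith)
    rw [hmdef]; exact_mod_cast congrArg (fun z : ℤ => (z : ℝ)) h
  have hmle : (m : ℝ) ≤ 2 * n / p := by
    rw [hcast]; exact Int.floor_le _
  have hmge : 2 * n / p - 1 ≤ (m : ℝ) := by
    rw [hcast]; linarith [Int.lt_floor_add_one (2 * n / p)]
  have hpm : p * (m : ℝ) ≤ 2 * n := by
    calc p * (m : ℝ) = (m : ℝ) * p := by ring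
    _ ≤ (2 * n / p) * p := by exact mul_le_mul_of_nonneg_right hmle hp0.le
    _ = 2 * n := by field_simp
  have hpm2 : 2 * n ≤ p * ((m : ℝ) + 1) := by
    have : 2 * n / p ≤ (m : ℝ) + 1 := by linarith
    calc 2 * n = (2 * n / p) * p := by field_simp
    _ ≤ ((m : ℝ) + 1) * p := mul_le_mul_of_nonneg_right this hp0.le
    _ = p * ((m : ℝ) + 1) := by ring
  have hterm : ∀ k ∈ Finset.range m,
      (1 - p ^ 2 * ((k : ℝ) + 1/2) ^ 2 / (2 * n ^ 2)) ≤
      (1 - (((p - 1) / 2) ^ 2 + (k : ℝ) * p * (p - 1) + (k : ℝ) ^ 2 * p ^ 2) / (2 * n ^ 2)) := by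
    intro k _
    have hk : (0:ℝ) ≤ (k : ℝ) := Nat.cast_nonneg k
    have h2n : (0:ℝ) < 2 * n ^ 2 := by positivity
    apply sub_le_sub_left
    gcongr
    nlinarith
  have hsum : ∑ k ∈ Finset.range m, (1 - p ^ 2 * ((k : ℝ) + 1/2) ^ 2 / (2 * n ^ 2)) ≤
      ∑ k ∈ Finset.range m,
        (1 - (((p - 1) / 2) ^ 2 + (k : ℝ) * p * (p - 1) + (k : ℝ) ^ 2 * p ^ 2) / (2 * n ^ 2)) :=
    Finset.sum_le_sum hterm
  have hsum2 : ∑ k ∈ Finset.range m, (1 - p ^ 2 * ((k : ℝ) + 1/2) ^ 2 / (2 * n ^ 2)) =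
      (m : ℝ) - p ^ 2 / (2 * n ^ 2) * ∑ k ∈ Finset.range m, ((k : ℝ) + 1/2) ^ 2 := by
    rw [Finset.sum_sub_distrib, Finset.sum_const, Finset.mul_sum]
    congr 1
    · simp
    · apply Finset.sum_congr rfl; intro k _; ring
  have hcube := aux_cube m
  have hfinal : (m : ℝ) - p ^ 2 / (2 * n ^ 2) * ((m : ℝ) ^ 3 / 3) ≥
      2 * n / (3 * p) - 1 + 1 / p := by
    have hmm : (1:ℝ) ≤ (m : ℝ) := by exact_mod_cast hm1
    have hpm0 : (0:ℝ) ≤ p * (m : ℝ) := by positivity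
    have h1 : p ^ 2 * (m : ℝ) ^ 2 ≤ 4 * n ^ 2 := by
      have := mul_le_mul hpm hpm hpm0 (by linarith)
      nlinarith
    have h2 : p ^ 2 * (m : ℝ) ^ 3 ≤ 4 * n ^ 2 * (m : ℝ) := by nlinarith
    have h3 : p ^ 2 / (2 * n ^ 2) * ((m : ℝ) ^ 3 / 3) ≤ 2 * (m : ℝ) / 3 := by
      rw [div_mul_eq_mul_div, div_le_iff₀ (by positivity : (0:ℝ) < 2 * n ^ 2)]
      nlinarith [h2]
    have h4 : 2 * n / (3 * p) - 1 + 1 / p ≤ (m : ℝ) / 3 := by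
      have hb : 1 / p ≤ 1 / 5 := by
        rw [div_le_div_iff₀ hp0 (by norm_num)]; linarith
      rw [show 2 * n / (3 * p) = (2 * n / p) / 3 from by ring]
      linarith
    linarith
  have hmono : (m : ℝ) - p ^ 2 / (2 * n ^ 2) * ∑ k ∈ Finset.range m, ((k : ℝ) + 1/2) ^ 2 ≥
      (m : ℝ) - p ^ 2 / (2 * n ^ 2) * ((m : ℝ) ^ 3 / 3) := by
    have : (0:ℝ) ≤ p ^ 2 / (2 * n ^ 2) := by positivity
    nlinarith [mul_le_mul_of_nonneg_left hcube this]
  rw [hsum2] at hsum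
  linarith
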